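/- Averaging over generating vectors: for an irreducible polynomial f over 𝔽₂ of degree m and G_m = {h ∈ 𝔽₂[x] : deg(h) < m}, the average over all g ∈ G_m^s of B_γ(g, f) equals 2^{-m} · Σ_{∅ ≠ u ⊆ [s]} γ_u (m/2)^{|u|} ∏_{i∈u}(b_i - a_i), where B_γ(g, f) = Σ_{∅ ≠ u ⊆ [s]} γ_u ∏_{i∈u}(b_i - a_i) · Σ_{k_u ∈ {1,...,2^m-1}^{|u|}, g_u · k_u ≡ 0 mod f} 2^{-μ(k_u)}. -/

import Mathlib

open scoped Classical

/-- identification of a natural number with a polynomial over `𝔽₂` via its binary digits. -/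
noncomputable def natToPoly (n : ℕ) : Polynomial (ZMod 2) :=
  ∑ i ∈ Finset.range (Nat.size n), if Nat.testBit n i then Polynomial.X ^ i else 0

/-- `μ(k)`, the length of the binary expansion of `k`. -/
def mu (k : ℕ) : ℕ := Nat.size k

/-- the figure-of-merit `B_γ(g, f)`. -/
noncomputable def Bcrit (s m : ℕ) (γ : Finset (Fin s) → ℝ) (a b : Fin s → ℝ)
    (f : Polynomial (ZMod 2)) (g : Fin s → ℕ) : ℝ :=
  ∑ u ∈ Finset.univ.powerset.filter (fun u : Finset (Fin s) => u.Nonempty),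
    γ u * (∏ i ∈ u, (b i - a i)) *
      ∑ k ∈ u.pi fun _ => Finset.Icc 1 (2 ^ m - 1),
        if f ∣ ∑ i ∈ u.attach, natToPoly (g i.1) * natToPoly (k i.1 i.2) then
          (1 : ℝ) / 2 ^ (∑ i ∈ u.attach, mu (k i.1 i.2))
        else 0

/-!
Swap the sums over `g` and `k`. For fixed `u` and `k`, reducing modulo `f` identifies
`{0, …, 2^m - 1}` with the field `𝔽₂[x]/(f)` of `2^m` elements, and the condition
`f ∣ Σ gᵢ kᵢ` becomes the vanishing of a nonzero linear form in `g`; it therefore holds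
for exactly `2^(sm) / 2^m` of the `g`. What remains is `Σ_{k_u} 2^{-μ(k_u)}`, which
factors as `∏_{i ∈ u} Σ_{k=1}^{2^m-1} 2^{-μ(k)} = (m/2)^{|u|}`.
-/

open Polynomial Finset

theorem coeff_natToPoly (n j : ℕ) : (natToPoly n).coeff j = if n.testBit j then 1 else 0 := by
  have hsize : n.testBit j → j < n.size := fun h => Nat.lt_size.2 (Nat.ge_two_pow_of_testBit h)
  rw [natToPoly, ← sum_filter, finsetSum_coeff]
  simp only [coeff_X_pow, sum_ite_eq, mem_filter, mem_range]
  grind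

theorem natToPoly_injective : Function.Injective natToPoly := fun n₁ n₂ h =>
  Nat.eq_of_testBit_eq fun i => by
    have := congrArg (coeff · i) h
    simp only [coeff_natToPoly] at this
    revert this
    cases n₁.testBit i <;> cases n₂.testBit i <;> decide

theorem natToPoly_eq_zero_iff {n : ℕ} : natToPoly n = 0 ↔ n = 0 :=
  natToPoly_injective.eq_iff' (by simp [natToPoly])

theorem degree_natToPoly_lt {n m : ℕ} (h : n < 2 ^ m) : (natToPoly n).degree < m :=
  (degree_lt_iff_coeff_zero _ _).2 fun j hj => by
    rw [coeff_natToPoly, Nat.testBit_eq_false_of_lt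
      (h.trans_le (Nat.pow_le_pow_right two_pos (by exact_mod_cast hj)))]
    rfl

theorem not_dvd_natToPoly {f : (ZMod 2)[X]} {n : ℕ} (hn : n ≠ 0) (hlt : n < 2 ^ f.natDegree) :
    ¬ f ∣ natToPoly n := fun h => by
  have hp : natToPoly n ≠ 0 := mt natToPoly_eq_zero_iff.1 hn
  exact (natDegree_le_of_dvd h hp).not_gt
    ((natDegree_lt_iff_degree_lt hp).2 (degree_natToPoly_lt hlt))

theorem natCard_adjoinRoot {K : Type*} [Field K] {f : K[X]} (hf : f ≠ 0) :
    Nat.card (AdjoinRoot f) = Nat.card K ^ f.natDegree := by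
  have := (AdjoinRoot.powerBasis hf).finite
  rw [Module.natCard_eq_pow_finrank (K := K), (AdjoinRoot.powerBasis hf).finrank,
    AdjoinRoot.powerBasis_dim]

theorem finite_adjoinRoot {K : Type*} [Field K] [Finite K] {f : K[X]} (hf : f ≠ 0) :
    Finite (AdjoinRoot f) :=
  have := (AdjoinRoot.powerBasis hf).finite
  Module.finite_of_finite K

theorem bijOn_mk_natToPoly {f : (ZMod 2)[X]} (hf : f ≠ 0) :
    Set.BijOn (fun n => AdjoinRoot.mk f (natToPoly n)) (range (2 ^ f.natDegree)) Set.univ := by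
  have hinj : Set.InjOn (fun n => AdjoinRoot.mk f (natToPoly n)) (range (2 ^ f.natDegree)) := by
    intro n₁ h₁ n₂ h₂ h
    rw [coe_range, Set.mem_Iio] at h₁ h₂
    refine natToPoly_injective (sub_eq_zero.1
      (eq_zero_of_dvd_of_degree_lt (AdjoinRoot.mk_eq_mk.1 h) ?_))
    rw [degree_eq_natDegree hf]
    exact (degree_sub_le _ _).trans_lt (max_lt (degree_natToPoly_lt h₁) (degree_natToPoly_lt h₂))
  have := finite_adjoinRoot hf
  have : Fintype (AdjoinRoot f) := .ofFinite (AdjoinRoot f)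
  refine ⟨Set.mapsTo_univ _ _, hinj, ?_⟩
  simpa using Finset.surjOn_of_injOn_of_card_le (t := univ) _ (by simp) hinj <| by
    rw [card_univ, card_range, ← Nat.card_eq_fintype_card, natCard_adjoinRoot hf, Nat.card_zmod]

theorem card_filter_piFinset_comp_of_bijOn {ι α β : Type*} [DecidableEq ι] [Fintype ι]
    [Fintype β] {S : Finset α} {φ : α → β} (hφ : Set.BijOn φ S Set.univ)
    (P : (ι → β) → Prop) [DecidablePred P] :
    #{g ∈ Fintype.piFinset fun _ => S | P (φ ∘ g)} = #{v | P v} := by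
  refine card_nbij (φ ∘ ·) (fun g hg => by simpa using (mem_filter.1 hg).2) ?_ ?_
  · intro g₁ hg₁ g₂ hg₂ h
    simp only [coe_filter, Fintype.mem_piFinset, Set.mem_ofPred_eq] at hg₁ hg₂
    exact funext fun i => hφ.injOn (hg₁.1 i) (hg₂.1 i) (congrFun h i)
  · intro v hv
    choose g hgS hgv using fun i => hφ.surjOn (Set.mem_univ (v i))
    have hgv : φ ∘ g = v := funext hgv
    refine ⟨g, ?_, hgv⟩
    simp only [coe_filter, Fintype.mem_piFinset, Set.mem_ofPred_eq, mem_univ, true_and] at hv ⊢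
    exact ⟨hgS, hgv ▸ hv⟩

theorem card_filter_dotProduct_eq_zero_mul_card {K ι : Type*} [Field K] [Fintype K]
    [DecidableEq K] [Fintype ι] {κ : ι → K} (hκ : κ ≠ 0) :
    #{v : ι → K | v ⬝ᵥ κ = 0} * Fintype.card K = Fintype.card K ^ Fintype.card ι := by
  let L : (ι → K) →+ K := AddMonoidHom.mk' (· ⬝ᵥ κ) fun v w => add_dotProduct v w κ
  obtain ⟨i, hi⟩ := Function.ne_iff.1 hκ
  have hL : Function.Surjective L := fun y =>
    ⟨Pi.single i (y / κ i), by simp [L, single_dotProduct, div_mul_cancel₀ _ hi]⟩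
  have := L.ker.card_mul_index
  rw [AddSubgroup.index_ker, AddMonoidHom.range_eq_top.2 hL,
    Nat.card_congr AddSubgroup.topEquiv.toEquiv, Nat.card_fun] at this
  simpa [Nat.card_eq_fintype_card, Fintype.card_subtype, L] using this

theorem card_filter_dvd_sum_natToPoly_mul {ι : Type*} [DecidableEq ι] [Fintype ι]
    {f : (ZMod 2)[X]} (hf : Irreducible f) {p : ι → (ZMod 2)[X]} (hp : ∃ i, ¬ f ∣ p i) :
    #{g ∈ Fintype.piFinset fun _ => range (2 ^ f.natDegree) | f ∣ ∑ i, natToPoly (g i) * p i} *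
      2 ^ f.natDegree = 2 ^ (Fintype.card ι * f.natDegree) := by
  have := Fact.mk hf
  have := finite_adjoinRoot hf.ne_zero
  have : Fintype (AdjoinRoot f) := .ofFinite (AdjoinRoot f)
  have hcard : Fintype.card (AdjoinRoot f) = 2 ^ f.natDegree := by
    rw [← Nat.card_eq_fintype_card, natCard_adjoinRoot hf.ne_zero, Nat.card_zmod]
  set κ : ι → AdjoinRoot f := AdjoinRoot.mk f ∘ p
  have hκ : κ ≠ 0 := by
    obtain ⟨i, hi⟩ := hp
    exact Function.ne_iff.2 ⟨i, mt AdjoinRoot.mk_eq_zero.1 hi⟩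
  set φ : ℕ → AdjoinRoot f := fun n => AdjoinRoot.mk f (natToPoly n)
  have hdvd (g : ι → ℕ) : f ∣ ∑ i, natToPoly (g i) * p i ↔ (φ ∘ g) ⬝ᵥ κ = 0 := by
    simp [φ, κ, ← AdjoinRoot.mk_eq_zero, dotProduct]
  calc _ = #{v : ι → AdjoinRoot f | v ⬝ᵥ κ = 0} * Fintype.card (AdjoinRoot f) := by
        rw [hcard, ← card_filter_piFinset_comp_of_bijOn (bijOn_mk_natToPoly hf.ne_zero)
          (fun v => v ⬝ᵥ κ = 0), filter_congr fun g _ => hdvd g]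
    _ = Fintype.card (AdjoinRoot f) ^ Fintype.card ι := by
        convert card_filter_dotProduct_eq_zero_mul_card hκ
    _ = _ := by rw [hcard, ← pow_mul, mul_comm]

theorem size_eq_of_mem_Ico {m k : ℕ} (hk : k ∈ Ico (2 ^ m) (2 ^ (m + 1))) : k.size = m + 1 := by
  rw [mem_Ico] at hk
  exact le_antisymm (Nat.size_le.2 hk.2) (Nat.lt_size.2 hk.1)

theorem sum_one_div_two_pow_mu (m : ℕ) :
    ∑ k ∈ Icc 1 (2 ^ m - 1), (1 : ℝ) / 2 ^ mu k = m / 2 := by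
  rw [Icc_sub_one_right_eq_Ico_of_not_isMin (by simp)]
  induction m with
  | zero => simp
  | succ m ih =>
    rw [← sum_Ico_consecutive _ Nat.one_le_two_pow (Nat.pow_le_pow_right two_pos m.le_succ), ih,
      sum_congr rfl fun k hk => by rw [mu, size_eq_of_mem_Ico hk], sum_const, Nat.card_Ico,
      pow_succ, Nat.mul_two, Nat.add_sub_cancel, nsmul_eq_mul]
    push_cast
    field_simp
    ring

theorem sum_piFinset_sum_pi_ite_dvd {ι : Type*} [DecidableEq ι] [Fintype ι] {f : (ZMod 2)[X]}
    (hf : Irreducible f) {u : Finset ι} (hu : u.Nonempty) :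
    ∑ g ∈ Fintype.piFinset fun _ : ι => range (2 ^ f.natDegree),
      ∑ k ∈ u.pi fun _ => Icc 1 (2 ^ f.natDegree - 1),
        (if f ∣ ∑ i ∈ u.attach, natToPoly (g i.1) * natToPoly (k i.1 i.2) then
          (1 : ℝ) / 2 ^ (∑ i ∈ u.attach, mu (k i.1 i.2))
        else 0) =
      2 ^ (Fintype.card ι * f.natDegree) / 2 ^ f.natDegree * (f.natDegree / 2 : ℝ) ^ u.card := by
  set m := f.natDegree
  have hcount : ∀ k ∈ u.pi fun _ => Icc 1 (2 ^ m - 1),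
      (#{g ∈ Fintype.piFinset fun _ : ι => range (2 ^ m) |
        f ∣ ∑ i ∈ u.attach, natToPoly (g i.1) * natToPoly (k i.1 i.2)} : ℝ) =
        2 ^ (Fintype.card ι * m) / 2 ^ m := by
    intro k hk
    set p : ι → (ZMod 2)[X] := fun i => if h : i ∈ u then natToPoly (k i h) else 0
    have hsum (g : ι → ℕ) : ∑ i ∈ u.attach, natToPoly (g i.1) * natToPoly (k i.1 i.2) =
        ∑ i, natToPoly (g i) * p i := by
      rw [← sum_subset (subset_univ u) fun i _ hi => by simp [p, hi], ← sum_attach u]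
      exact sum_congr rfl fun i _ => by simp [p, i.2]
    have hp : ∃ i, ¬ f ∣ p i := by
      obtain ⟨i, hi⟩ := hu
      have hki := mem_Icc.1 (mem_pi.1 hk i hi)
      exact ⟨i, by simpa [p, hi] using not_dvd_natToPoly (f := f) (by omega) (show _ < 2 ^ m by omega)⟩
    rw [eq_div_iff (by positivity), filter_congr fun g _ => by rw [hsum g]]
    exact_mod_cast card_filter_dvd_sum_natToPoly_mul hf hp
  rw [sum_comm]
  calc _ = ∑ k ∈ u.pi fun _ => Icc 1 (2 ^ m - 1),
        2 ^ (Fintype.card ι * m) / 2 ^ m * ∏ i ∈ u.attach, (1 : ℝ) / 2 ^ mu (k i.1 i.2) := by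
        refine sum_congr rfl fun k hk => ?_
        rw [← sum_filter, sum_const, nsmul_eq_mul, hcount k hk, prod_div_distrib, prod_const_one,
          prod_pow_eq_pow_sum]
    _ = 2 ^ (Fintype.card ι * m) / 2 ^ m *
        ∏ i ∈ u, ∑ j ∈ Icc 1 (2 ^ m - 1), (1 : ℝ) / 2 ^ mu j := by
        rw [← mul_sum, prod_sum]
    _ = _ := by rw [prod_congr rfl fun _ _ => sum_one_div_two_pow_mu m, prod_const]

theorem Bcrit_average_general (s m : ℕ)
    (γ : Finset (Fin s) → ℝ) (a b : Fin s → ℝ)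
    (f : Polynomial (ZMod 2)) (hf : Irreducible f) (hdeg : f.natDegree = m) :
    (∑ g ∈ Fintype.piFinset fun _ : Fin s => Finset.range (2 ^ m),
        Bcrit s m γ a b f g) / 2 ^ (s * m) =
      (1 / 2 ^ m) *
        ∑ u ∈ Finset.univ.powerset.filter (fun u : Finset (Fin s) => u.Nonempty),
          γ u * ((m : ℝ) / 2) ^ u.card * ∏ i ∈ u, (b i - a i) := by
  subst hdeg
  simp only [Bcrit]
  rw [sum_comm, sum_div, mul_sum]
  refine sum_congr rfl fun u hu => ?_
  rw [← mul_sum, sum_piFinset_sum_pi_ite_dvd hf (mem_filter.1 hu).2, Fintype.card_fin]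
  field_simp

theorem Bcrit_average (s m : ℕ) (hs : 1 ≤ s) (hm : 1 ≤ m)
    (γ : Finset (Fin s) → ℝ) (hγ : ∀ u, 0 < γ u) (a b : Fin s → ℝ) (hab : ∀ i, a i < b i)
    (f : Polynomial (ZMod 2)) (hf : Irreducible f) (hdeg : f.natDegree = m) :
    (∑ g ∈ Fintype.piFinset fun _ : Fin s => Finset.range (2 ^ m),
        Bcrit s m γ a b f g) / 2 ^ (s * m) =
      (1 / 2 ^ m) *
        ∑ u ∈ Finset.univ.powerset.filter (fun u : Finset (Fin s) => u.Nonempty),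
          γ u * ((m : ℝ) / 2) ^ u.card * ∏ i ∈ u, (b i - a i) :=
  Bcrit_average_general s m γ a b f hf hdeg
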